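/- arXiv:2103.02564 — 3 statements merged into one kernel-verified Lean document; each statement's English description precedes it below -/
import Mathlib

section
/- Let d ≥ 1, T > 0 and γ > 1. Let Φ : ℝ^d × [0,T] → ℝ be C² in the space variable with M₁ := sup_{ℝ^d×[0,T]} |∇Φ| < ∞ and M₂ := sup_{ℝ^d×[0,T]} |ΔΦ| < ∞, and let G₀ ≥ 0. Suppose C > 0 satisfies C ≥ (2/d)(G₀ + M₂), and R : [0,T] → (0,∞) is differentiable with R'(t) ≥ (2C+1)R(t) + M₁²/2 for all t ∈ [0,T]. Define Π(x,t) := C (R(t) − |x|²/2). Then for every (x,t) ∈ ℝ^d × [0,T] with |x|² < 2R(t) one has ∂_t Π(x,t) − |∇Π(x,t)|² − ∇Π(x,t)·∇Φ(x,t) − γ Π(x,t) (ΔΠ(x,t) + G₀ + M₂) ≥ 0; that is, Π is a pointwise supersolution of the pressure inequality on the region where it is positive. -/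
open MeasureTheory Real Set Filter Topology
open scoped RealInnerProductSpace
noncomputable section

/-- Spatial partial derivative in the `i`-th coordinate direction. -/
def pd {d : ℕ} (i : Fin d) (f : EuclideanSpace ℝ (Fin d) → ℝ)
    (x : EuclideanSpace ℝ (Fin d)) : ℝ :=
  fderiv ℝ f x (EuclideanSpace.single i 1)

/-- Spatial Laplacian. -/
def lap {d : ℕ} (f : EuclideanSpace ℝ (Fin d) → ℝ) (x : EuclideanSpace ℝ (Fin d)) : ℝ :=
  ∑ i, pd i (pd i f) x

/-!
On the positivity set of `Π = C (R − |x|²/2)` one has `∇Π = −C x` and `ΔΠ = −C d`. The choice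
`C ≥ (2/d)(G₀ + M₂)` makes `ΔΠ + G₀ + M₂ ≤ 0`, so the reaction term `−γ Π (ΔΠ + G₀ + M₂)` is
nonnegative. The remaining terms are bounded below by `C (R' − C |x|² − M₁ |x|)`, and on
`|x|² < 2R` Young's inequality `M₁ |x| ≤ |x|²/2 + M₁²/2` shows that the growth condition on `R`
makes this nonnegative.
-/

section Paraboloid

variable {F : Type*} [NormedAddCommGroup F] [InnerProductSpace ℝ F]

theorem hasFDerivAt_paraboloid (C c : ℝ) (x : F) :
    HasFDerivAt (fun y : F => C * (c - ‖y‖ ^ 2 / 2)) ((-C) • innerSL ℝ x) x := by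
  have h := (hasFDerivAt_const (C * c) x).sub
    ((hasStrictFDerivAt_norm_sq x).hasFDerivAt.const_mul (C / 2))
  rw [show (fun y : F => C * (c - ‖y‖ ^ 2 / 2)) = fun y => C * c - C / 2 * ‖y‖ ^ 2 by
    funext y; ring]
  refine h.congr_fderiv ?_
  ext v; simp; ring

theorem gradient_paraboloid [CompleteSpace F] (C c : ℝ) (x : F) :
    gradient (fun y : F => C * (c - ‖y‖ ^ 2 / 2)) x = (-C) • x := by
  refine HasGradientAt.gradient ?_
  rw [hasGradientAt_iff_hasFDerivAt]
  refine (hasFDerivAt_paraboloid C c x).congr_fderiv ?_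
  ext v; simp

theorem paraboloid_supersolution_ineq (x g : F) {C γ ρ ρ' M₁ K : ℝ} (hC : 0 < C) (hγ : 0 ≤ γ)
    (hg : ‖g‖ ≤ M₁) (hx : ‖x‖ ^ 2 < 2 * ρ) (hρ' : (2 * C + 1) * ρ + M₁ ^ 2 / 2 ≤ ρ') (hK : K ≤ 0) :
    0 ≤ C * ρ' - ‖(-C) • x‖ ^ 2 - ⟪(-C) • x, g⟫ - γ * (C * (ρ - ‖x‖ ^ 2 / 2)) * K := by
  have hreaction : γ * (C * (ρ - ‖x‖ ^ 2 / 2)) * K ≤ 0 :=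
    mul_nonpos_of_nonneg_of_nonpos (mul_nonneg hγ (mul_pos hC (by linarith)).le) hK
  have hnorm : ‖(-C) • x‖ ^ 2 = C ^ 2 * ‖x‖ ^ 2 := by
    rw [norm_smul, mul_pow, Real.norm_eq_abs, sq_abs, neg_sq]
  have hinner : ⟪(-C) • x, g⟫ ≤ C * (‖x‖ * M₁) := by
    rw [real_inner_smul_left, neg_mul, neg_le]
    have := (abs_le.mp ((abs_real_inner_le_norm x g).trans
      (mul_le_mul_of_nonneg_left hg (norm_nonneg x)))).1
    nlinarith
  have hyoung : ‖x‖ * M₁ ≤ ‖x‖ ^ 2 / 2 + M₁ ^ 2 / 2 := by nlinarith [sq_nonneg (‖x‖ - M₁)]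
  nlinarith [mul_le_mul_of_nonneg_left hρ' hC.le, mul_le_mul_of_nonneg_left hyoung hC.le,
    mul_pos (mul_pos hC hC) (show (0 : ℝ) < 2 * ρ - ‖x‖ ^ 2 by linarith)]

end Paraboloid

theorem pd_paraboloid {d : ℕ} (C c : ℝ) (i : Fin d) (x : EuclideanSpace ℝ (Fin d)) :
    pd i (fun y : EuclideanSpace ℝ (Fin d) => C * (c - ‖y‖ ^ 2 / 2)) x = -C * x i := by
  rw [pd, (hasFDerivAt_paraboloid C c x).fderiv]
  simp [EuclideanSpace.inner_single_right]

theorem pd_const_mul_coord {d : ℕ} (a : ℝ) (i : Fin d) (x : EuclideanSpace ℝ (Fin d)) :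
    pd i (fun z : EuclideanSpace ℝ (Fin d) => a * z i) x = a := by
  have h : HasFDerivAt (fun z : EuclideanSpace ℝ (Fin d) => a * z i)
      (a • (EuclideanSpace.proj i : EuclideanSpace ℝ (Fin d) →L[ℝ] ℝ)) x :=
    (EuclideanSpace.proj (𝕜 := ℝ) i).hasFDerivAt.const_mul a
  simp [pd, h.fderiv]

theorem lap_paraboloid {d : ℕ} (C c : ℝ) (x : EuclideanSpace ℝ (Fin d)) :
    lap (fun y : EuclideanSpace ℝ (Fin d) => C * (c - ‖y‖ ^ 2 / 2)) x = -C * d := by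
  have hpd : ∀ i : Fin d, pd i (fun y : EuclideanSpace ℝ (Fin d) => C * (c - ‖y‖ ^ 2 / 2)) =
      fun z => -C * z i := fun i => funext (pd_paraboloid C c i)
  simp only [lap, hpd, pd_const_mul_coord]
  simp [mul_comm]

theorem le_mul_of_two_div_mul_le {a C n : ℝ} (hC : 0 < C) (hn : 0 < n) (h : 2 / n * a ≤ C) :
    a ≤ C * n := by
  have h2 : 2 * a ≤ C * n := by
    calc 2 * a = 2 / n * a * n := by field_simp
      _ ≤ C * n := mul_le_mul_of_nonneg_right h hn.le
  nlinarith [mul_pos hC hn]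

theorem stmt0_general (d : ℕ) (hd : 1 ≤ d) (T : ℝ) (γ : ℝ) (hγ : 1 < γ)
    (Φ : EuclideanSpace ℝ (Fin d) → ℝ → ℝ) (M₁ M₂ G₀ : ℝ)
    (hM₁ : ∀ (x : EuclideanSpace ℝ (Fin d)), ∀ t ∈ Icc (0:ℝ) T,
      ‖gradient (fun y => Φ y t) x‖ ≤ M₁)
    (C : ℝ) (hC : 0 < C) (hCd : (2 / (d : ℝ)) * (G₀ + M₂) ≤ C)
    (R : ℝ → ℝ) (hRdiff : ∀ t ∈ Icc (0:ℝ) T, DifferentiableAt ℝ R t)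
    (hR' : ∀ t ∈ Icc (0:ℝ) T, (2 * C + 1) * R t + M₁ ^ 2 / 2 ≤ deriv R t)
    (Pr : EuclideanSpace ℝ (Fin d) → ℝ → ℝ)
    (hPr : ∀ x t, Pr x t = C * (R t - ‖x‖ ^ 2 / 2)) :
    ∀ (x : EuclideanSpace ℝ (Fin d)), ∀ t ∈ Icc (0:ℝ) T, ‖x‖ ^ 2 < 2 * R t →
      0 ≤ deriv (fun s => Pr x s) t - ‖gradient (fun y => Pr y t) x‖ ^ 2
          - ⟪gradient (fun y => Pr y t) x, gradient (fun y => Φ y t) x⟫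
          - γ * Pr x t * (lap (fun y => Pr y t) x + G₀ + M₂) := by
  obtain rfl : Pr = fun y s => C * (R s - ‖y‖ ^ 2 / 2) := funext₂ hPr
  intro x t ht hx
  have hderiv : deriv (fun s => C * (R s - ‖x‖ ^ 2 / 2)) t = C * deriv R t :=
    (((hRdiff t ht).hasDerivAt.sub_const _).const_mul C).deriv
  have hlap_le : G₀ + M₂ ≤ C * d :=
    le_mul_of_two_div_mul_le hC (by exact_mod_cast hd) hCd
  simp only [hderiv, gradient_paraboloid, lap_paraboloid]
  exact paraboloid_supersolution_ineq x _ hC (by linarith) (hM₁ x t ht) hx (hR' t ht)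
    (by linarith)

/-- the explicit parabola `Π(x,t) = C (R(t) − |x|²/2)` is a pointwise
supersolution of the pressure inequality on the region where `|x|² < 2R(t)`. -/
theorem stmt0 (d : ℕ) (hd : 1 ≤ d) (T : ℝ) (hT : 0 < T) (γ : ℝ) (hγ : 1 < γ)
    (Φ : EuclideanSpace ℝ (Fin d) → ℝ → ℝ) (M₁ M₂ G₀ : ℝ)
    (hΦC2 : ∀ t ∈ Icc (0:ℝ) T, ContDiff ℝ 2 (fun x => Φ x t))
    (hM₁ : ∀ (x : EuclideanSpace ℝ (Fin d)), ∀ t ∈ Icc (0:ℝ) T,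
      ‖gradient (fun y => Φ y t) x‖ ≤ M₁)
    (hM₂ : ∀ (x : EuclideanSpace ℝ (Fin d)), ∀ t ∈ Icc (0:ℝ) T,
      |lap (fun y => Φ y t) x| ≤ M₂)
    (hG₀ : 0 ≤ G₀)
    (C : ℝ) (hC : 0 < C) (hCd : (2 / (d : ℝ)) * (G₀ + M₂) ≤ C)
    (R : ℝ → ℝ) (hRdiff : ∀ t ∈ Icc (0:ℝ) T, DifferentiableAt ℝ R t)
    (hRpos : ∀ t ∈ Icc (0:ℝ) T, 0 < R t)
    (hR' : ∀ t ∈ Icc (0:ℝ) T, (2 * C + 1) * R t + M₁ ^ 2 / 2 ≤ deriv R t)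
    (Pr : EuclideanSpace ℝ (Fin d) → ℝ → ℝ)
    (hPr : ∀ x t, Pr x t = C * (R t - ‖x‖ ^ 2 / 2)) :
    ∀ (x : EuclideanSpace ℝ (Fin d)), ∀ t ∈ Icc (0:ℝ) T, ‖x‖ ^ 2 < 2 * R t →
      0 ≤ deriv (fun s => Pr x s) t - ‖gradient (fun y => Pr y t) x‖ ^ 2
          - ⟪gradient (fun y => Pr y t) x, gradient (fun y => Φ y t) x⟫
          - γ * Pr x t * (lap (fun y => Pr y t) x + G₀ + M₂) :=
  stmt0_general d hd T γ hγ Φ M₁ M₂ G₀ hM₁ C hC hCd R hRdiff hR' Pr hPr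
end
end

section
/- Fix d ≥ 1, T > 0 and write Q_T = ℝ^d × (0,T). Let Φ : ℝ^d × [0,T] → ℝ be smooth and G : ℝ → ℝ continuous. For γ > 1 let p : ℝ^d × [0,T] → [0,∞) be a smooth function, supported for every t in a fixed bounded open set Ω, satisfying the pressure equation ∂_t p = γ p (Δp + ΔΦ + G(p)) + ∇p·∇(p + Φ) pointwise. Then ((γ−1)/2) ∫₀^T ∫_{ℝ^d} |∇p|² dx dt ≤ ∫_{ℝ^d} p(x,0) dx + ((γ−1)/2) ∫₀^T ∫_Ω |∇Φ|² dx dt + γ ∫₀^T ∫_{ℝ^d} p |G(p)| dx dt. In particular, if 0 ≤ p ≤ p_M, |G| ≤ M on [0,p_M] and γ ≥ 2, then ∫∫_{Q_T} |∇p|² dx dt ≤ 2∫ p(x,0) dx + ∫∫ |∇Φ|² + 4 T |Ω| p_M M, a bound independent of γ. -/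
open MeasureTheory Real Set Filter Topology
open scoped RealInnerProductSpace
noncomputable section

variable {d : ℕ}

lemma inner_gradient_eq (f : EuclideanSpace ℝ (Fin d) → ℝ) (x v : EuclideanSpace ℝ (Fin d)) :
    ⟪gradient f x, v⟫ = fderiv ℝ f x v := by
  show ⟪(InnerProductSpace.toDual ℝ _).symm (fderiv ℝ f x), v⟫ = fderiv ℝ f x v
  rw [← InnerProductSpace.toDual_apply_apply, LinearIsometryEquiv.apply_symm_apply]

lemma gradient_coord (f : EuclideanSpace ℝ (Fin d) → ℝ) (x : EuclideanSpace ℝ (Fin d)) (i : Fin d) :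
    gradient f x i = pd i f x := by
  have := inner_gradient_eq f x (EuclideanSpace.single i 1)
  rw [EuclideanSpace.inner_single_right] at this
  simpa [pd] using this

lemma inner_gradient_gradient (f g : EuclideanSpace ℝ (Fin d) → ℝ) (x : EuclideanSpace ℝ (Fin d)) :
    ⟪gradient f x, gradient g x⟫ = ∑ i, pd i f x * pd i g x := by
  rw [PiLp.inner_apply]
  exact Finset.sum_congr rfl fun i _ => by
    simp [gradient_coord, RCLike.inner_apply, mul_comm]

lemma norm_gradient_sq (f : EuclideanSpace ℝ (Fin d) → ℝ) (x : EuclideanSpace ℝ (Fin d)) :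
    ‖gradient f x‖ ^ 2 = ∑ i, (pd i f x) ^ 2 := by
  rw [← real_inner_self_eq_norm_sq, inner_gradient_gradient]
  exact Finset.sum_congr rfl fun i _ => (sq (pd i f x)).symm ▸ by ring

lemma fderiv_zero_of_nonneg_of_zero {f : EuclideanSpace ℝ (Fin d) → ℝ}
    (hf : ∀ y, 0 ≤ f y) {x : EuclideanSpace ℝ (Fin d)} (hx : f x = 0) :
    fderiv ℝ f x = 0 := by
  apply IsLocalMin.fderiv_eq_zero
  exact Filter.Eventually.of_forall fun y => hx ▸ hf y

lemma gradient_zero_of_nonneg_of_zero {f : EuclideanSpace ℝ (Fin d) → ℝ}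
    (hf : ∀ y, 0 ≤ f y) {x : EuclideanSpace ℝ (Fin d)} (hx : f x = 0) :
    gradient f x = 0 := by
  show (InnerProductSpace.toDual ℝ _).symm (fderiv ℝ f x) = 0
  rw [fderiv_zero_of_nonneg_of_zero hf hx]; simp

lemma contDiff_pd {f : EuclideanSpace ℝ (Fin d) → ℝ} (hf : ContDiff ℝ (⊤ : ℕ∞) f) (i : Fin d) :
    ContDiff ℝ (⊤ : ℕ∞) (pd i f) := by
  have := (ContinuousLinearMap.apply ℝ ℝ (EuclideanSpace.single i 1)).contDiff (n := (⊤ : ℕ∞)) |>.comp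
    (hf.fderiv_right (𝕜 := ℝ) (m := (⊤ : ℕ∞)) (by simp))
  exact this

lemma hcs_pd {f : EuclideanSpace ℝ (Fin d) → ℝ} (hf : HasCompactSupport f) (i : Fin d) :
    HasCompactSupport (pd i f) :=
  (hf.fderiv (𝕜 := ℝ)).comp_left (g := fun L : _ →L[ℝ] ℝ => L (EuclideanSpace.single i 1)) rfl

lemma ibp {f g : EuclideanSpace ℝ (Fin d) → ℝ} (hf : ContDiff ℝ (⊤ : ℕ∞) f) (hg : ContDiff ℝ (⊤ : ℕ∞) g)
    (hfs : HasCompactSupport f) (i : Fin d) :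
    ∫ x, f x * pd i (pd i g) x = -∫ x, pd i f x * pd i g x := by
  have hpdg : ContDiff ℝ (⊤ : ℕ∞) (pd i g) := contDiff_pd hg i
  have h1 : Integrable (fun x => fderiv ℝ f x (EuclideanSpace.single i 1) * pd i g x) :=
    (((contDiff_pd hf i).continuous).mul hpdg.continuous).integrable_of_hasCompactSupport
      ((hcs_pd hfs i).mul_right)
  have h2 : Integrable (fun x => f x * fderiv ℝ (pd i g) x (EuclideanSpace.single i 1)) :=
    (hf.continuous.mul (contDiff_pd hpdg i).continuous).integrable_of_hasCompactSupport
      (hfs.mul_right)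
  have h3 : Integrable (fun x => f x * pd i g x) :=
    (hf.continuous.mul hpdg.continuous).integrable_of_hasCompactSupport hfs.mul_right
  exact integral_mul_fderiv_eq_neg_fderiv_mul_of_integrable h1 h2 h3
    (fun x _ => hf.differentiable (by simp) x) (fun x _ => hpdg.differentiable (by simp) x)

lemma aux_cont {d : ℕ} (T : ℝ) (μ : Measure (EuclideanSpace ℝ (Fin d)))
    (f : EuclideanSpace ℝ (Fin d) × ℝ → ℝ) (hf : Continuous f)
    (bound : EuclideanSpace ℝ (Fin d) → ℝ) (hbound : Integrable bound μ)
    (hb : ∀ᵐ x ∂μ, ∀ t ∈ Icc (0:ℝ) T, ‖f (x, t)‖ ≤ bound x) :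
    ContinuousOn (fun t => ∫ x, f (x, t) ∂μ) (Icc (0:ℝ) T) := by
  intro t₀ ht₀
  apply continuousWithinAt_of_dominated (bound := bound)
  · exact Filter.Eventually.of_forall fun t =>
      (hf.comp (continuous_id.prodMk continuous_const)).aestronglyMeasurable
  · filter_upwards [self_mem_nhdsWithin] with t ht
    filter_upwards [hb] with x hx using hx t ht
  · exact hbound
  · exact Filter.Eventually.of_forall fun x =>
      ((hf.comp (continuous_const.prodMk continuous_id)).continuousAt).continuousWithinAt


set_option maxHeartbeats 2000000 in
/-- the uniform `L²(Q_T)` gradient estimate for the pressure, together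
with its γ-independent consequence. -/
theorem stmt4 (d : ℕ) (hd : 1 ≤ d) (T : ℝ) (hT : 0 < T) (γ : ℝ) (hγ : 1 < γ)
    (Ω : Set (EuclideanSpace ℝ (Fin d))) (hΩo : IsOpen Ω) (hΩb : Bornology.IsBounded Ω)
    (Φ : EuclideanSpace ℝ (Fin d) → ℝ → ℝ)
    (hΦ : ContDiff ℝ (⊤ : ℕ∞) (fun q : (EuclideanSpace ℝ (Fin d)) × ℝ => Φ q.1 q.2))
    (G : ℝ → ℝ) (hG : Continuous G)
    (p : EuclideanSpace ℝ (Fin d) → ℝ → ℝ)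
    (hp : ContDiff ℝ (⊤ : ℕ∞) (fun q : (EuclideanSpace ℝ (Fin d)) × ℝ => p q.1 q.2))
    (hppos : ∀ x t, 0 ≤ p x t)
    (hsupp : ∀ t ∈ Icc (0:ℝ) T, (Function.support fun x => p x t) ⊆ Ω)
    (hPDE : ∀ (x : EuclideanSpace ℝ (Fin d)), ∀ t ∈ Icc (0:ℝ) T,
      deriv (fun s => p x s) t =
        γ * p x t * (lap (fun y => p y t) x + lap (fun y => Φ y t) x + G (p x t))
        + ⟪gradient (fun y => p y t) x,
            gradient (fun y => p y t) x + gradient (fun y => Φ y t) x⟫)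
    (p_M M : ℝ) :
    ((γ - 1) / 2) * (∫ t in Ioo (0:ℝ) T, ∫ x, ‖gradient (fun y => p y t) x‖ ^ 2)
      ≤ (∫ x, p x 0)
        + ((γ - 1) / 2) * (∫ t in Ioo (0:ℝ) T, ∫ x in Ω, ‖gradient (fun y => Φ y t) x‖ ^ 2)
        + γ * (∫ t in Ioo (0:ℝ) T, ∫ x, p x t * |G (p x t)|)
    ∧ ((∀ x t, p x t ≤ p_M) → (∀ q ∈ Icc (0:ℝ) p_M, |G q| ≤ M) → 2 ≤ γ →
        (∫ t in Ioo (0:ℝ) T, ∫ x, ‖gradient (fun y => p y t) x‖ ^ 2)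
          ≤ 2 * (∫ x, p x 0)
            + (∫ t in Ioo (0:ℝ) T, ∫ x in Ω, ‖gradient (fun y => Φ y t) x‖ ^ 2)
            + 4 * T * (volume Ω).toReal * p_M * M) := by
  classical
  -- ## Basic abbreviations and smoothness facts
  have hdp : Differentiable ℝ (fun z : EuclideanSpace ℝ (Fin d) × ℝ => p z.1 z.2) :=
    hp.differentiable (by simp)
  have hdΦ : Differentiable ℝ (fun z : EuclideanSpace ℝ (Fin d) × ℝ => Φ z.1 z.2) :=
    hΦ.differentiable (by simp)
  have hpt : ∀ t, ContDiff ℝ (⊤ : ℕ∞) (fun y => p y t) :=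
    fun t => hp.comp (contDiff_id.prodMk contDiff_const)
  have hΦt : ∀ t, ContDiff ℝ (⊤ : ℕ∞) (fun y => Φ y t) :=
    fun t => hΦ.comp (contDiff_id.prodMk contDiff_const)
  -- joint representation of the spatial partial derivatives
  have hpdP : ∀ (i : Fin d) x t, pd i (fun y => p y t) x =
      fderiv ℝ (fun z : EuclideanSpace ℝ (Fin d) × ℝ => p z.1 z.2) (x, t)
        (EuclideanSpace.single i 1, 0) := by
    intro i x t
    have h1 : HasFDerivAt (fun y : EuclideanSpace ℝ (Fin d) => (y, t))
        ((ContinuousLinearMap.id ℝ (EuclideanSpace ℝ (Fin d))).prod 0) x :=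
      (hasFDerivAt_id x).prodMk (hasFDerivAt_const t x)
    have h2 : HasFDerivAt (fun y => p y t)
        ((fderiv ℝ (fun z : EuclideanSpace ℝ (Fin d) × ℝ => p z.1 z.2) (x, t)).comp
          ((ContinuousLinearMap.id ℝ (EuclideanSpace ℝ (Fin d))).prod 0)) x :=
      by have := (hdp (x, t)).hasFDerivAt.comp x h1; exact this
    rw [pd, h2.fderiv]
    simp
  have hΦdP : ∀ (i : Fin d) x t, pd i (fun y => Φ y t) x =
      fderiv ℝ (fun z : EuclideanSpace ℝ (Fin d) × ℝ => Φ z.1 z.2) (x, t)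
        (EuclideanSpace.single i 1, 0) := by
    intro i x t
    have h1 : HasFDerivAt (fun y : EuclideanSpace ℝ (Fin d) => (y, t))
        ((ContinuousLinearMap.id ℝ (EuclideanSpace ℝ (Fin d))).prod 0) x :=
      (hasFDerivAt_id x).prodMk (hasFDerivAt_const t x)
    have h2 : HasFDerivAt (fun y => Φ y t)
        ((fderiv ℝ (fun z : EuclideanSpace ℝ (Fin d) × ℝ => Φ z.1 z.2) (x, t)).comp
          ((ContinuousLinearMap.id ℝ (EuclideanSpace ℝ (Fin d))).prod 0)) x :=
      by have := (hdΦ (x, t)).hasFDerivAt.comp x h1; exact this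
    rw [pd, h2.fderiv]
    simp
  -- joint representation of the time derivative
  have hqD : ∀ x t, HasDerivAt (fun s => p x s)
      (fderiv ℝ (fun z : EuclideanSpace ℝ (Fin d) × ℝ => p z.1 z.2) (x, t) (0, 1)) t := by
    intro x t
    have h1 : HasDerivAt (fun s : ℝ => ((x, s) : EuclideanSpace ℝ (Fin d) × ℝ)) (0, 1) t :=
      (hasDerivAt_const t x).prodMk (hasDerivAt_id t)
    exact (hdp (x, t)).hasFDerivAt.comp_hasDerivAt t h1
  have hqP : ∀ x t, deriv (fun s => p x s) t =
      fderiv ℝ (fun z : EuclideanSpace ℝ (Fin d) × ℝ => p z.1 z.2) (x, t) (0, 1) :=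
    fun x t => (hqD x t).deriv
  -- ## Support facts
  have hK : IsCompact (closure Ω) := hΩb.isCompact_closure
  have hzero : ∀ t ∈ Icc (0:ℝ) T, ∀ x, x ∉ Ω → p x t = 0 := by
    intro t ht x hx
    by_contra h
    exact hx (hsupp t ht (by simpa [Function.mem_support] using h))
  have hfd0 : ∀ t ∈ Icc (0:ℝ) T, ∀ x, x ∉ Ω → fderiv ℝ (fun y => p y t) x = 0 :=
    fun t ht x hx => fderiv_zero_of_nonneg_of_zero (fun y => hppos y t) (hzero t ht x hx)
  have hg0 : ∀ t ∈ Icc (0:ℝ) T, ∀ x, x ∉ Ω → gradient (fun y => p y t) x = 0 :=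
    fun t ht x hx => gradient_zero_of_nonneg_of_zero (fun y => hppos y t) (hzero t ht x hx)
  have hpd0 : ∀ t ∈ Icc (0:ℝ) T, ∀ x, x ∉ Ω → ∀ i, pd i (fun y => p y t) x = 0 := by
    intro t ht x hx i; rw [pd, hfd0 t ht x hx]; rfl
  have hcsp : ∀ t ∈ Icc (0:ℝ) T, HasCompactSupport (fun y => p y t) := by
    intro t ht
    exact HasCompactSupport.intro hK fun x hx => hzero t ht x fun h => hx (subset_closure h)
  -- generic integrability of `p * h`
  have hint : ∀ t ∈ Icc (0:ℝ) T, ∀ (h : EuclideanSpace ℝ (Fin d) → ℝ), Continuous h →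
      Integrable (fun x => p x t * h x) := by
    intro t ht h hc
    exact ((hpt t).continuous.mul hc).integrable_of_hasCompactSupport ((hcsp t ht).mul_right)
  -- integrability of products of partial derivatives (with p compactly supported)
  have hintpd : ∀ t ∈ Icc (0:ℝ) T, ∀ (g : EuclideanSpace ℝ (Fin d) → ℝ), ContDiff ℝ (⊤ : ℕ∞) g →
      ∀ i, Integrable (fun x => pd i (fun y => p y t) x * pd i g x) := by
    intro t ht g hg i
    apply ((contDiff_pd (hpt t) i).continuous.mul (contDiff_pd hg i).continuous).integrable_of_hasCompactSupport
    exact HasCompactSupport.intro hK fun x hx => by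
      rw [Pi.mul_apply, hpd0 t ht x (fun h => hx (subset_closure h)) i, zero_mul]
  have hgradpc : ∀ t, Continuous (fun x => gradient (fun y => p y t) x) := by
    intro t
    have := (InnerProductSpace.toDual ℝ (EuclideanSpace ℝ (Fin d))).symm.continuous.comp
      ((hpt t).continuous_fderiv (by simp))
    simpa [Function.comp_def, gradient] using this
  have hgradΦc : ∀ t, Continuous (fun x => gradient (fun y => Φ y t) x) := by
    intro t
    have := (InnerProductSpace.toDual ℝ (EuclideanSpace ℝ (Fin d))).symm.continuous.comp
      ((hΦt t).continuous_fderiv (by simp))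
    simpa [Function.comp_def, gradient] using this
  have hlapc : ∀ (g : EuclideanSpace ℝ (Fin d) → ℝ), ContDiff ℝ (⊤ : ℕ∞) g → Continuous (lap g) := by
    intro g hg
    show Continuous fun x => ∑ i, pd i (pd i g) x
    exact continuous_finset_sum _ fun i _ => (contDiff_pd (contDiff_pd hg i) i).continuous
  -- the key integration by parts identity for the Laplacian terms
  have hlap : ∀ t ∈ Icc (0:ℝ) T, ∀ (g : EuclideanSpace ℝ (Fin d) → ℝ), ContDiff ℝ (⊤ : ℕ∞) g →
      (∫ x, p x t * lap g x) = -∫ x, (∑ i, pd i (fun y => p y t) x * pd i g x) := by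
    intro t ht g hg
    have h1 : ∀ i : Fin d, Integrable (fun x => p x t * pd i (pd i g) x) :=
      fun i => hint t ht _ (contDiff_pd (contDiff_pd hg i) i).continuous
    calc (∫ x, p x t * lap g x) = ∫ x, ∑ i, p x t * pd i (pd i g) x := by
          simp only [lap, Finset.mul_sum]
      _ = ∑ i, ∫ x, p x t * pd i (pd i g) x := integral_finset_sum _ fun i _ => h1 i
      _ = ∑ i, -(∫ x, pd i (fun y => p y t) x * pd i g x) :=
          Finset.sum_congr rfl fun i _ => ibp (hpt t) hg (hcsp t ht) i
      _ = -(∑ i, ∫ x, pd i (fun y => p y t) x * pd i g x) := by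
          rw [Finset.sum_neg_distrib]
      _ = -∫ x, (∑ i, pd i (fun y => p y t) x * pd i g x) := by
          rw [integral_finset_sum _ fun i _ => hintpd t ht g hg i]
  -- ## The spatial identity for each fixed time
  have key : ∀ t ∈ Icc (0:ℝ) T,
      (∫ x, fderiv ℝ (fun z : EuclideanSpace ℝ (Fin d) × ℝ => p z.1 z.2) (x, t) (0, 1)) =
        -(γ-1) * (∫ x, ‖gradient (fun y => p y t) x‖ ^ 2)
        - (γ-1) * (∫ x, ⟪gradient (fun y => p y t) x, gradient (fun y => Φ y t) x⟫)
        + γ * (∫ x, p x t * G (p x t)) := by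
    intro t ht
    have hptw : ∀ x, fderiv ℝ (fun z : EuclideanSpace ℝ (Fin d) × ℝ => p z.1 z.2) (x, t) (0, 1) =
        γ * (p x t * lap (fun y => p y t) x) + γ * (p x t * lap (fun y => Φ y t) x)
        + γ * (p x t * G (p x t))
        + ((∑ i, pd i (fun y => p y t) x * pd i (fun y => p y t) x)
           + (∑ i, pd i (fun y => p y t) x * pd i (fun y => Φ y t) x)) := by
      intro x
      rw [← hqP x t, hPDE x t ht, inner_add_right, inner_gradient_gradient,
        inner_gradient_gradient]
      ring
    have i1 : Integrable (fun x => p x t * lap (fun y => p y t) x) :=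
      hint t ht _ (hlapc _ (hpt t))
    have i2 : Integrable (fun x => p x t * lap (fun y => Φ y t) x) :=
      hint t ht _ (hlapc _ (hΦt t))
    have i3 : Integrable (fun x => p x t * G (p x t)) :=
      hint t ht _ (hG.comp (hpt t).continuous)
    have i4 : Integrable (fun x => ∑ i, pd i (fun y => p y t) x * pd i (fun y => p y t) x) :=
      integrable_finset_sum _ fun i _ => hintpd t ht _ (hpt t) i
    have i5 : Integrable (fun x => ∑ i, pd i (fun y => p y t) x * pd i (fun y => Φ y t) x) :=
      integrable_finset_sum _ fun i _ => hintpd t ht _ (hΦt t) i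
    have hAs : (∫ x, ‖gradient (fun y => p y t) x‖ ^ 2)
        = ∫ x, ∑ i, pd i (fun y => p y t) x * pd i (fun y => p y t) x := by
      refine integral_congr_ae (Filter.Eventually.of_forall fun x => ?_)
      simp only [← real_inner_self_eq_norm_sq, inner_gradient_gradient]
    have hBs : (∫ x, ⟪gradient (fun y => p y t) x, gradient (fun y => Φ y t) x⟫)
        = ∫ x, ∑ i, pd i (fun y => p y t) x * pd i (fun y => Φ y t) x := by
      refine integral_congr_ae (Filter.Eventually.of_forall fun x => ?_)
      simp only [inner_gradient_gradient]
    calc (∫ x, fderiv ℝ (fun z : EuclideanSpace ℝ (Fin d) × ℝ => p z.1 z.2) (x, t) (0, 1))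
        = ∫ x, (γ * (p x t * lap (fun y => p y t) x) + γ * (p x t * lap (fun y => Φ y t) x)
            + γ * (p x t * G (p x t))
            + ((∑ i, pd i (fun y => p y t) x * pd i (fun y => p y t) x)
               + (∑ i, pd i (fun y => p y t) x * pd i (fun y => Φ y t) x))) :=
          integral_congr_ae (Filter.Eventually.of_forall hptw)
      _ = γ * (∫ x, p x t * lap (fun y => p y t) x) + γ * (∫ x, p x t * lap (fun y => Φ y t) x)
          + γ * (∫ x, p x t * G (p x t))
          + ((∫ x, ∑ i, pd i (fun y => p y t) x * pd i (fun y => p y t) x)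
             + (∫ x, ∑ i, pd i (fun y => p y t) x * pd i (fun y => Φ y t) x)) := by
          have e1 : ∫ x, (γ * (p x t * lap (fun y => p y t) x)
                + γ * (p x t * lap (fun y => Φ y t) x) + γ * (p x t * G (p x t))
                + ((∑ i, pd i (fun y => p y t) x * pd i (fun y => p y t) x)
                   + (∑ i, pd i (fun y => p y t) x * pd i (fun y => Φ y t) x)))
              = (∫ x, (γ * (p x t * lap (fun y => p y t) x)
                + γ * (p x t * lap (fun y => Φ y t) x) + γ * (p x t * G (p x t))))
              + ∫ x, ((∑ i, pd i (fun y => p y t) x * pd i (fun y => p y t) x)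
                   + (∑ i, pd i (fun y => p y t) x * pd i (fun y => Φ y t) x)) :=
            integral_add (((i1.const_mul γ).add (i2.const_mul γ)).add (i3.const_mul γ))
              (i4.add i5)
          have e2 : ∫ x, (γ * (p x t * lap (fun y => p y t) x)
                + γ * (p x t * lap (fun y => Φ y t) x) + γ * (p x t * G (p x t)))
              = (∫ x, (γ * (p x t * lap (fun y => p y t) x)
                + γ * (p x t * lap (fun y => Φ y t) x))) + ∫ x, γ * (p x t * G (p x t)) :=
            integral_add ((i1.const_mul γ).add (i2.const_mul γ)) (i3.const_mul γ)
          have e3 : ∫ x, (γ * (p x t * lap (fun y => p y t) x)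
                + γ * (p x t * lap (fun y => Φ y t) x))
              = (∫ x, γ * (p x t * lap (fun y => p y t) x))
                + ∫ x, γ * (p x t * lap (fun y => Φ y t) x) :=
            integral_add (i1.const_mul γ) (i2.const_mul γ)
          have e4 : ∫ x, ((∑ i, pd i (fun y => p y t) x * pd i (fun y => p y t) x)
                   + (∑ i, pd i (fun y => p y t) x * pd i (fun y => Φ y t) x))
              = (∫ x, ∑ i, pd i (fun y => p y t) x * pd i (fun y => p y t) x)
                + ∫ x, ∑ i, pd i (fun y => p y t) x * pd i (fun y => Φ y t) x :=
            integral_add i4 i5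
          rw [e1, e2, e3, e4, integral_const_mul γ _, integral_const_mul γ _, integral_const_mul γ _]
      _ = -(γ-1) * (∫ x, ‖gradient (fun y => p y t) x‖ ^ 2)
          - (γ-1) * (∫ x, ⟪gradient (fun y => p y t) x, gradient (fun y => Φ y t) x⟫)
          + γ * (∫ x, p x t * G (p x t)) := by
          rw [hlap t ht _ (hpt t), hlap t ht _ (hΦt t), hAs, hBs]; ring
  -- ## Continuity in time of the various spatial integrals
  have main_cont : ∀ (f : EuclideanSpace ℝ (Fin d) × ℝ → ℝ), Continuous f →
      (∀ x, x ∉ Ω → ∀ t ∈ Icc (0:ℝ) T, f (x, t) = 0) →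
      ContinuousOn (fun t => ∫ x, f (x, t)) (Icc (0:ℝ) T) := by
    intro f hf h0
    obtain ⟨Cb, hCb⟩ := (hK.prod (isCompact_Icc (a := (0:ℝ)) (b := T))).exists_bound_of_continuousOn hf.continuousOn
    apply aux_cont T volume f hf ((closure Ω).indicator fun _ => Cb)
    · exact (integrableOn_const hK.measure_lt_top.ne).integrable_indicator
        hK.isClosed.measurableSet
    · refine Filter.Eventually.of_forall fun x t ht => ?_
      by_cases hx : x ∈ closure Ω
      · simpa [Set.indicator_of_mem hx] using hCb (x, t) ⟨hx, ht⟩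
      · rw [h0 x (fun h => hx (subset_closure h)) t ht]
        simp [Set.indicator_of_notMem hx]
  have hfpc : Continuous (fderiv ℝ (fun z : EuclideanSpace ℝ (Fin d) × ℝ => p z.1 z.2)) :=
    hp.continuous_fderiv (by simp)
  have hfΦc : Continuous (fderiv ℝ (fun z : EuclideanSpace ℝ (Fin d) × ℝ => Φ z.1 z.2)) :=
    hΦ.continuous_fderiv (by simp)
  have hAcont : ContinuousOn (fun t => ∫ x, ‖gradient (fun y => p y t) x‖ ^ 2) (Icc (0:ℝ) T) := by
    have hrep : (fun t => ∫ x, ‖gradient (fun y => p y t) x‖ ^ 2)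
        = fun t => ∫ x, (fun z : EuclideanSpace ℝ (Fin d) × ℝ =>
            ∑ i, (fderiv ℝ (fun w : EuclideanSpace ℝ (Fin d) × ℝ => p w.1 w.2) z
              (EuclideanSpace.single i 1, 0)) ^ 2) (x, t) := by
      funext t
      refine integral_congr_ae (Filter.Eventually.of_forall fun x => ?_)
      simp only [norm_gradient_sq]
      exact Finset.sum_congr rfl fun i _ => by rw [hpdP i x t]
    rw [hrep]
    apply main_cont (fun z : EuclideanSpace ℝ (Fin d) × ℝ =>
            ∑ i, (fderiv ℝ (fun w : EuclideanSpace ℝ (Fin d) × ℝ => p w.1 w.2) z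
              (EuclideanSpace.single i 1, 0)) ^ 2)
    · exact continuous_finset_sum _ fun i _ =>
        ((ContinuousLinearMap.apply ℝ ℝ (EuclideanSpace.single i 1, (0:ℝ))).continuous.comp
          hfpc).pow 2
    · intro x hx t ht
      refine Finset.sum_eq_zero fun i _ => ?_
      rw [← hpdP i x t, hpd0 t ht x hx i]
      norm_num
  have hBcont : ContinuousOn
      (fun t => ∫ x, ⟪gradient (fun y => p y t) x, gradient (fun y => Φ y t) x⟫)
      (Icc (0:ℝ) T) := by
    have hrep : (fun t => ∫ x, ⟪gradient (fun y => p y t) x, gradient (fun y => Φ y t) x⟫)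
        = fun t => ∫ x, (fun z : EuclideanSpace ℝ (Fin d) × ℝ =>
            ∑ i, (fderiv ℝ (fun w : EuclideanSpace ℝ (Fin d) × ℝ => p w.1 w.2) z
              (EuclideanSpace.single i 1, 0))
              * (fderiv ℝ (fun w : EuclideanSpace ℝ (Fin d) × ℝ => Φ w.1 w.2) z
              (EuclideanSpace.single i 1, 0))) (x, t) := by
      funext t
      refine integral_congr_ae (Filter.Eventually.of_forall fun x => ?_)
      simp only [inner_gradient_gradient]
      exact Finset.sum_congr rfl fun i _ => by rw [hpdP i x t, hΦdP i x t]
    rw [hrep]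
    apply main_cont (fun z : EuclideanSpace ℝ (Fin d) × ℝ =>
            ∑ i, (fderiv ℝ (fun w : EuclideanSpace ℝ (Fin d) × ℝ => p w.1 w.2) z
              (EuclideanSpace.single i 1, 0))
              * (fderiv ℝ (fun w : EuclideanSpace ℝ (Fin d) × ℝ => Φ w.1 w.2) z
              (EuclideanSpace.single i 1, 0)))
    · exact continuous_finset_sum _ fun i _ =>
        (((ContinuousLinearMap.apply ℝ ℝ (EuclideanSpace.single i 1, (0:ℝ))).continuous.comp
          hfpc)).mul
        ((ContinuousLinearMap.apply ℝ ℝ (EuclideanSpace.single i 1, (0:ℝ))).continuous.comp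
          hfΦc)
    · intro x hx t ht
      refine Finset.sum_eq_zero fun i _ => ?_
      rw [← hpdP i x t, hpd0 t ht x hx i, zero_mul]
  have hCcont : ContinuousOn (fun t => ∫ x, p x t * G (p x t)) (Icc (0:ℝ) T) := by
    apply main_cont (fun z : EuclideanSpace ℝ (Fin d) × ℝ => p z.1 z.2 * G (p z.1 z.2))
      (hp.continuous.mul (hG.comp hp.continuous))
    intro x hx t ht
    rw [hzero t ht x hx, zero_mul]
  have hC'cont : ContinuousOn (fun t => ∫ x, p x t * |G (p x t)|) (Icc (0:ℝ) T) := by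
    apply main_cont (fun z : EuclideanSpace ℝ (Fin d) × ℝ => p z.1 z.2 * |G (p z.1 z.2)|)
      (hp.continuous.mul (continuous_abs.comp (hG.comp hp.continuous)))
    intro x hx t ht
    rw [hzero t ht x hx, zero_mul]
  have hJcont : ContinuousOn (fun t => ∫ x in Ω, ‖gradient (fun y => Φ y t) x‖ ^ 2)
      (Icc (0:ℝ) T) := by
    have hcJ : Continuous (fun z : EuclideanSpace ℝ (Fin d) × ℝ =>
        ∑ i, (fderiv ℝ (fun w : EuclideanSpace ℝ (Fin d) × ℝ => Φ w.1 w.2) z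
          (EuclideanSpace.single i 1, 0)) ^ 2) :=
      continuous_finset_sum _ fun i _ =>
        ((ContinuousLinearMap.apply ℝ ℝ (EuclideanSpace.single i 1, (0:ℝ))).continuous.comp
          hfΦc).pow 2
    obtain ⟨CJ, hCJ⟩ := (hK.prod (isCompact_Icc (a := (0:ℝ)) (b := T))).exists_bound_of_continuousOn hcJ.continuousOn
    have hrep : (fun t => ∫ x in Ω, ‖gradient (fun y => Φ y t) x‖ ^ 2)
        = fun t => ∫ x, (fun z : EuclideanSpace ℝ (Fin d) × ℝ =>
            ∑ i, (fderiv ℝ (fun w : EuclideanSpace ℝ (Fin d) × ℝ => Φ w.1 w.2) z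
              (EuclideanSpace.single i 1, 0)) ^ 2) (x, t) ∂(volume.restrict Ω) := by
      funext t
      refine integral_congr_ae (Filter.Eventually.of_forall fun x => ?_)
      simp only [norm_gradient_sq]
      exact Finset.sum_congr rfl fun i _ => by rw [hΦdP i x t]
    rw [hrep]
    apply aux_cont T (volume.restrict Ω) _ hcJ (fun _ => CJ)
    · exact integrableOn_const hΩb.measure_lt_top.ne
    · filter_upwards [ae_restrict_mem hΩo.measurableSet] with x hx
      intro t ht
      exact hCJ (x, t) ⟨subset_closure hx, ht⟩
  have hFcont : ContinuousOn (fun t => ∫ x, p x t) (Icc (0:ℝ) T) := by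
    apply main_cont (fun z : EuclideanSpace ℝ (Fin d) × ℝ => p z.1 z.2) hp.continuous
    intro x hx t ht
    exact hzero t ht x hx
  -- ## Differentiation under the integral sign
  have hFderiv : ∀ t₀ ∈ Ioo (0:ℝ) T, HasDerivAt (fun t => ∫ x, p x t)
      (∫ x, fderiv ℝ (fun z : EuclideanSpace ℝ (Fin d) × ℝ => p z.1 z.2) (x, t₀) (0, 1)) t₀ := by
    intro t₀ ht₀
    have hqc : Continuous (fun z : EuclideanSpace ℝ (Fin d) × ℝ =>
        fderiv ℝ (fun w : EuclideanSpace ℝ (Fin d) × ℝ => p w.1 w.2) z (0, 1)) :=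
      (ContinuousLinearMap.apply ℝ ℝ ((0 : EuclideanSpace ℝ (Fin d)), (1:ℝ))).continuous.comp
        hfpc
    obtain ⟨Cq, hCq⟩ := (hK.prod (isCompact_Icc (a := (0:ℝ)) (b := T))).exists_bound_of_continuousOn hqc.continuousOn
    have hε : 0 < min t₀ (T - t₀) := lt_min ht₀.1 (sub_pos.2 ht₀.2)
    have hball : ∀ t ∈ Metric.ball t₀ (min t₀ (T - t₀)), t ∈ Ioo (0:ℝ) T := by
      intro t htb
      rw [Metric.mem_ball, Real.dist_eq, abs_lt] at htb
      have h1 : min t₀ (T - t₀) ≤ t₀ := min_le_left _ _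
      have h2 : min t₀ (T - t₀) ≤ T - t₀ := min_le_right _ _
      exact ⟨by linarith, by linarith⟩
    refine (hasDerivAt_integral_of_dominated_loc_of_deriv_le (Metric.ball_mem_nhds t₀ hε)
      (F := fun t x => p x t)
      (F' := fun t x => fderiv ℝ (fun z : EuclideanSpace ℝ (Fin d) × ℝ => p z.1 z.2) (x, t) (0, 1))
      (bound := (closure Ω).indicator fun _ => Cq)
      ?_ ?_ ?_ ?_ ?_ ?_).2
    · exact Filter.Eventually.of_forall fun t => ((hpt t).continuous).aestronglyMeasurable
    · exact ((hpt t₀).continuous).integrable_of_hasCompactSupport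
        (hcsp t₀ (Ioo_subset_Icc_self ht₀))
    · exact (hqc.comp (continuous_id.prodMk continuous_const)).aestronglyMeasurable
    · refine Filter.Eventually.of_forall fun x => fun t htb => ?_
      have htI : t ∈ Ioo (0:ℝ) T := hball t htb
      by_cases hx : x ∈ closure Ω
      · simpa [Set.indicator_of_mem hx] using hCq (x, t) ⟨hx, Ioo_subset_Icc_self htI⟩
      · have hx' : x ∉ Ω := fun h => hx (subset_closure h)
        have hev : (fun s => p x s) =ᶠ[𝓝 t] fun _ => (0:ℝ) := by
          filter_upwards [isOpen_Ioo.mem_nhds htI] with s hs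
          exact hzero s (Ioo_subset_Icc_self hs) x hx'
        show ‖fderiv ℝ (fun z : EuclideanSpace ℝ (Fin d) × ℝ => p z.1 z.2) (x, t) (0, 1)‖ ≤ _
        rw [← hqP x t, hev.deriv_eq, deriv_const]
        simp [Set.indicator_of_notMem hx]
    · exact (integrableOn_const hK.measure_lt_top.ne).integrable_indicator
        hK.isClosed.measurableSet
    · exact Filter.Eventually.of_forall fun x => fun t _ => hqD x t
  -- ## Fundamental theorem of calculus
  have hFTC : ∫ t in (0:ℝ)..T,
      (-(γ-1) * (∫ x, ‖gradient (fun y => p y t) x‖ ^ 2)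
        - (γ-1) * (∫ x, ⟪gradient (fun y => p y t) x, gradient (fun y => Φ y t) x⟫)
        + γ * (∫ x, p x t * G (p x t)))
      = (∫ x, p x T) - (∫ x, p x 0) := by
    apply intervalIntegral.integral_eq_sub_of_hasDeriv_right_of_le hT.le hFcont
    · intro t ht
      have h := (hFderiv t ht).hasDerivWithinAt (s := Ioi t)
      rwa [key t (Ioo_subset_Icc_self ht)] at h
    · apply ContinuousOn.intervalIntegrable
      rw [uIcc_of_le hT.le]
      exact ((continuousOn_const.mul hAcont).sub (continuousOn_const.mul hBcont)).add
        (continuousOn_const.mul hCcont)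
  -- ## Pointwise-in-time inequalities
  have hBlow : ∀ t ∈ Ioo (0:ℝ) T,
      -(∫ x, ‖gradient (fun y => p y t) x‖ ^ 2)/2
        - (∫ x in Ω, ‖gradient (fun y => Φ y t) x‖ ^ 2)/2
      ≤ ∫ x, ⟪gradient (fun y => p y t) x, gradient (fun y => Φ y t) x⟫ := by
    intro t ht
    have htI := Ioo_subset_Icc_self ht
    have iA : Integrable (fun x => ‖gradient (fun y => p y t) x‖ ^ 2) :=
      ((hgradpc t).norm.pow 2).integrable_of_hasCompactSupport
        (HasCompactSupport.intro hK fun x hx => by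
          simp only [Pi.pow_apply]; rw [hg0 t htI x fun h => hx (subset_closure h)]; simp)
    have iB : Integrable
        (fun x => ⟪gradient (fun y => p y t) x, gradient (fun y => Φ y t) x⟫) :=
      ((hgradpc t).inner (hgradΦc t)).integrable_of_hasCompactSupport
        (HasCompactSupport.intro hK fun x hx => by
          rw [hg0 t htI x fun h => hx (subset_closure h), inner_zero_left])
    have iJ : IntegrableOn (fun x => ‖gradient (fun y => Φ y t) x‖ ^ 2) Ω := by
      obtain ⟨CΦ, hCΦ⟩ := hK.exists_bound_of_continuousOn
        ((hgradΦc t).norm.pow 2).continuousOn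
      refine Measure.integrableOn_of_bounded hΩb.measure_lt_top.ne
        ((hgradΦc t).norm.pow 2).aestronglyMeasurable (M := CΦ) ?_
      filter_upwards [ae_restrict_mem hΩo.measurableSet] with x hx
      exact hCΦ x (subset_closure hx)
    have hBeq : (∫ x, ⟪gradient (fun y => p y t) x, gradient (fun y => Φ y t) x⟫)
        = ∫ x in Ω, ⟪gradient (fun y => p y t) x, gradient (fun y => Φ y t) x⟫ :=
      (setIntegral_eq_integral_of_forall_compl_eq_zero fun x hx => by
        rw [hg0 t htI x hx, inner_zero_left]).symm
    have hmono : ∫ x in Ω, (-(‖gradient (fun y => p y t) x‖ ^ 2)/2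
          - (‖gradient (fun y => Φ y t) x‖ ^ 2)/2)
        ≤ ∫ x in Ω, ⟪gradient (fun y => p y t) x, gradient (fun y => Φ y t) x⟫ := by
      refine setIntegral_mono_on
        (((iA.integrableOn.neg.div_const 2)).sub (iJ.div_const 2))
        iB.integrableOn hΩo.measurableSet fun x hx => ?_
      have hid := norm_add_sq_real (gradient (fun y => p y t) x) (gradient (fun y => Φ y t) x)
      have hnn := sq_nonneg ‖gradient (fun y => p y t) x + gradient (fun y => Φ y t) x‖
      linarith
    have hsplitΩ : ∫ x in Ω, (-(‖gradient (fun y => p y t) x‖ ^ 2)/2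
          - (‖gradient (fun y => Φ y t) x‖ ^ 2)/2)
        = -(∫ x in Ω, ‖gradient (fun y => p y t) x‖ ^ 2)/2
          - (∫ x in Ω, ‖gradient (fun y => Φ y t) x‖ ^ 2)/2 := by
      have iS1 : IntegrableOn (fun x => -(‖gradient (fun y => p y t) x‖ ^ 2)/2) Ω :=
        iA.integrableOn.neg.div_const 2
      have iS2 : IntegrableOn (fun x => (‖gradient (fun y => Φ y t) x‖ ^ 2)/2) Ω :=
        iJ.div_const 2
      rw [integral_sub iS1 iS2, integral_div, integral_div, integral_neg]
    have h1 : ∫ x in Ω, ‖gradient (fun y => p y t) x‖ ^ 2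
        ≤ ∫ x, ‖gradient (fun y => p y t) x‖ ^ 2 :=
      setIntegral_le_integral iA (Filter.Eventually.of_forall fun x => by positivity)
    rw [hBeq]
    calc -(∫ x, ‖gradient (fun y => p y t) x‖ ^ 2)/2
          - (∫ x in Ω, ‖gradient (fun y => Φ y t) x‖ ^ 2)/2
        ≤ -(∫ x in Ω, ‖gradient (fun y => p y t) x‖ ^ 2)/2
          - (∫ x in Ω, ‖gradient (fun y => Φ y t) x‖ ^ 2)/2 := by linarith
      _ = ∫ x in Ω, (-(‖gradient (fun y => p y t) x‖ ^ 2)/2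
          - (‖gradient (fun y => Φ y t) x‖ ^ 2)/2) := hsplitΩ.symm
      _ ≤ _ := hmono
  have hCle : ∀ t ∈ Ioo (0:ℝ) T,
      (∫ x, p x t * G (p x t)) ≤ ∫ x, p x t * |G (p x t)| := by
    intro t ht
    refine integral_mono (hint t (Ioo_subset_Icc_self ht) _ (hG.comp (hpt t).continuous))
      (hint t (Ioo_subset_Icc_self ht) _ (continuous_abs.comp (hG.comp (hpt t).continuous)))
      fun x => ?_
    exact mul_le_mul_of_nonneg_left (le_abs_self _) (hppos x t)
  -- ## Time-integrability and integrated identities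
  have hioo : ∀ g : ℝ → ℝ, ContinuousOn g (Icc (0:ℝ) T) → IntegrableOn g (Ioo (0:ℝ) T) :=
    fun g hg => (hg.integrableOn_compact isCompact_Icc).mono_set Ioo_subset_Icc_self
  have iTA := hioo _ hAcont
  have iTB := hioo _ hBcont
  have iTC := hioo _ hCcont
  have iTC' := hioo _ hC'cont
  have iTJ := hioo _ hJcont
  have hIoo : (∫ t in Ioo (0:ℝ) T, (-(γ-1) * (∫ x, ‖gradient (fun y => p y t) x‖ ^ 2)
      - (γ-1) * (∫ x, ⟪gradient (fun y => p y t) x, gradient (fun y => Φ y t) x⟫)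
      + γ * (∫ x, p x t * G (p x t))))
      = (∫ x, p x T) - (∫ x, p x 0) := by
    rw [← integral_Ioc_eq_integral_Ioo, ← intervalIntegral.integral_of_le hT.le]
    exact hFTC
  have hsplit : (∫ t in Ioo (0:ℝ) T, (-(γ-1) * (∫ x, ‖gradient (fun y => p y t) x‖ ^ 2)
      - (γ-1) * (∫ x, ⟪gradient (fun y => p y t) x, gradient (fun y => Φ y t) x⟫)
      + γ * (∫ x, p x t * G (p x t))))
      = -(γ-1) * (∫ t in Ioo (0:ℝ) T, ∫ x, ‖gradient (fun y => p y t) x‖ ^ 2)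
        - (γ-1) * (∫ t in Ioo (0:ℝ) T,
            ∫ x, ⟪gradient (fun y => p y t) x, gradient (fun y => Φ y t) x⟫)
        + γ * (∫ t in Ioo (0:ℝ) T, ∫ x, p x t * G (p x t)) := by
    have j1 : IntegrableOn (fun t => -(γ-1) * (∫ x, ‖gradient (fun y => p y t) x‖ ^ 2)
        - (γ-1) * (∫ x, ⟪gradient (fun y => p y t) x, gradient (fun y => Φ y t) x⟫))
        (Ioo (0:ℝ) T) := (iTA.const_mul _).sub (iTB.const_mul _)
    have e1 : (∫ t in Ioo (0:ℝ) T, (-(γ-1) * (∫ x, ‖gradient (fun y => p y t) x‖ ^ 2)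
        - (γ-1) * (∫ x, ⟪gradient (fun y => p y t) x, gradient (fun y => Φ y t) x⟫)
        + γ * (∫ x, p x t * G (p x t))))
        = (∫ t in Ioo (0:ℝ) T, (-(γ-1) * (∫ x, ‖gradient (fun y => p y t) x‖ ^ 2)
            - (γ-1) * (∫ x, ⟪gradient (fun y => p y t) x, gradient (fun y => Φ y t) x⟫)))
          + ∫ t in Ioo (0:ℝ) T, γ * (∫ x, p x t * G (p x t)) :=
      integral_add j1 (iTC.const_mul γ)
    have e2 : (∫ t in Ioo (0:ℝ) T, (-(γ-1) * (∫ x, ‖gradient (fun y => p y t) x‖ ^ 2)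
            - (γ-1) * (∫ x, ⟪gradient (fun y => p y t) x, gradient (fun y => Φ y t) x⟫)))
        = (∫ t in Ioo (0:ℝ) T, -(γ-1) * (∫ x, ‖gradient (fun y => p y t) x‖ ^ 2))
          - ∫ t in Ioo (0:ℝ) T, (γ-1) *
              (∫ x, ⟪gradient (fun y => p y t) x, gradient (fun y => Φ y t) x⟫) :=
      integral_sub (iTA.const_mul (-(γ-1))) (iTB.const_mul (γ-1))
    rw [e1, e2, integral_const_mul (-(γ-1)) _, integral_const_mul (γ-1) _,
      integral_const_mul γ _]
  have hmain : -(∫ x, p x 0)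
      ≤ -(γ-1) * (∫ t in Ioo (0:ℝ) T, ∫ x, ‖gradient (fun y => p y t) x‖ ^ 2)
        - (γ-1) * (∫ t in Ioo (0:ℝ) T,
            ∫ x, ⟪gradient (fun y => p y t) x, gradient (fun y => Φ y t) x⟫)
        + γ * (∫ t in Ioo (0:ℝ) T, ∫ x, p x t * G (p x t)) := by
    have hFT : 0 ≤ ∫ x, p x T := integral_nonneg fun x => hppos x T
    calc -(∫ x, p x 0) ≤ (∫ x, p x T) - (∫ x, p x 0) := by linarith
      _ = _ := by rw [← hIoo, hsplit]
  have hIB : -(∫ t in Ioo (0:ℝ) T, ∫ x, ‖gradient (fun y => p y t) x‖ ^ 2)/2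
      - (∫ t in Ioo (0:ℝ) T, ∫ x in Ω, ‖gradient (fun y => Φ y t) x‖ ^ 2)/2
      ≤ ∫ t in Ioo (0:ℝ) T,
          ∫ x, ⟪gradient (fun y => p y t) x, gradient (fun y => Φ y t) x⟫ := by
    have jS1 : IntegrableOn (fun t => -(∫ x, ‖gradient (fun y => p y t) x‖ ^ 2)/2) (Ioo (0:ℝ) T) :=
      iTA.neg.div_const 2
    have jS2 : IntegrableOn (fun t => (∫ x in Ω, ‖gradient (fun y => Φ y t) x‖ ^ 2)/2)
        (Ioo (0:ℝ) T) := iTJ.div_const 2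
    have h : (∫ t in Ioo (0:ℝ) T, (-(∫ x, ‖gradient (fun y => p y t) x‖ ^ 2)/2
          - (∫ x in Ω, ‖gradient (fun y => Φ y t) x‖ ^ 2)/2))
        ≤ ∫ t in Ioo (0:ℝ) T,
            ∫ x, ⟪gradient (fun y => p y t) x, gradient (fun y => Φ y t) x⟫ :=
      setIntegral_mono_on (jS1.sub jS2) iTB measurableSet_Ioo hBlow
    rwa [integral_sub jS1 jS2, integral_div, integral_div, integral_neg] at h
  have hIC : (∫ t in Ioo (0:ℝ) T, ∫ x, p x t * G (p x t))
      ≤ ∫ t in Ioo (0:ℝ) T, ∫ x, p x t * |G (p x t)| :=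
    setIntegral_mono_on iTC iTC' measurableSet_Ioo hCle
  -- ## Assembly of part 1
  have part1 : ((γ - 1) / 2) * (∫ t in Ioo (0:ℝ) T, ∫ x, ‖gradient (fun y => p y t) x‖ ^ 2)
      ≤ (∫ x, p x 0)
        + ((γ - 1) / 2) * (∫ t in Ioo (0:ℝ) T, ∫ x in Ω, ‖gradient (fun y => Φ y t) x‖ ^ 2)
        + γ * (∫ t in Ioo (0:ℝ) T, ∫ x, p x t * |G (p x t)|) := by
    have m1 : (γ - 1) * (-(∫ t in Ioo (0:ℝ) T,
          ∫ x, ⟪gradient (fun y => p y t) x, gradient (fun y => Φ y t) x⟫))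
        ≤ (γ - 1) * ((∫ t in Ioo (0:ℝ) T, ∫ x, ‖gradient (fun y => p y t) x‖ ^ 2)/2
            + (∫ t in Ioo (0:ℝ) T, ∫ x in Ω, ‖gradient (fun y => Φ y t) x‖ ^ 2)/2) :=
      mul_le_mul_of_nonneg_left (by linarith [hIB]) (by linarith)
    have m2 : γ * (∫ t in Ioo (0:ℝ) T, ∫ x, p x t * G (p x t))
        ≤ γ * (∫ t in Ioo (0:ℝ) T, ∫ x, p x t * |G (p x t)|) :=
      mul_le_mul_of_nonneg_left hIC (by linarith)
    nlinarith [hmain, m1, m2]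
  refine ⟨part1, ?_⟩
  -- ## Part 2
  intro hpM hM hγ2
  have hpM0 : 0 ≤ p_M := le_trans (hppos 0 0) (hpM 0 0)
  have hM0 : 0 ≤ M := le_trans (abs_nonneg _) (hM p_M ⟨hpM0, le_refl _⟩)
  have hC'0 : 0 ≤ ∫ t in Ioo (0:ℝ) T, ∫ x, p x t * |G (p x t)| :=
    setIntegral_nonneg measurableSet_Ioo fun t _ =>
      integral_nonneg fun x => mul_nonneg (hppos x t) (abs_nonneg _)
  have hF0 : 0 ≤ ∫ x, p x 0 := integral_nonneg fun x => hppos x 0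
  have hC'le : (∫ t in Ioo (0:ℝ) T, ∫ x, p x t * |G (p x t)|)
      ≤ T * ((volume Ω).toReal * (p_M * M)) := by
    have hptle : ∀ t ∈ Ioo (0:ℝ) T,
        (∫ x, p x t * |G (p x t)|) ≤ (volume Ω).toReal * (p_M * M) := by
      intro t ht
      have htI := Ioo_subset_Icc_self ht
      rw [← setIntegral_eq_integral_of_forall_compl_eq_zero
        (fun x hx => by rw [hzero t htI x hx, zero_mul])]
      calc (∫ x in Ω, p x t * |G (p x t)|)
          ≤ ∫ x in Ω, p_M * M := by
            refine setIntegral_mono_on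
              ((hint t htI _ (continuous_abs.comp (hG.comp (hpt t).continuous))).integrableOn)
              (integrableOn_const hΩb.measure_lt_top.ne) hΩo.measurableSet
              fun x _ => ?_
            exact mul_le_mul (hpM x t) (hM (p x t) ⟨hppos x t, hpM x t⟩) (abs_nonneg _) hpM0
        _ = (volume Ω).toReal * (p_M * M) := by rw [setIntegral_const, smul_eq_mul, measureReal_def]
    calc (∫ t in Ioo (0:ℝ) T, ∫ x, p x t * |G (p x t)|)
        ≤ ∫ t in Ioo (0:ℝ) T, ((volume Ω).toReal * (p_M * M)) := by
          refine setIntegral_mono_on (hioo _ hC'cont) (integrableOn_const (lt_top_iff_ne_top.1 ?_))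
            measurableSet_Ioo hptle
          rw [Real.volume_Ioo]
          exact ENNReal.ofReal_lt_top
      _ = T * ((volume Ω).toReal * (p_M * M)) := by
          rw [setIntegral_const, smul_eq_mul, measureReal_def, Real.volume_Ioo, sub_zero,
            ENNReal.toReal_ofReal hT.le]
  have hγ1 : (0:ℝ) < (γ - 1)/2 := by linarith
  have h2 : γ * (∫ t in Ioo (0:ℝ) T, ∫ x, p x t * |G (p x t)|)
      ≤ 2 * (γ - 1) * (T * ((volume Ω).toReal * (p_M * M))) := by
    calc γ * (∫ t in Ioo (0:ℝ) T, ∫ x, p x t * |G (p x t)|)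
        ≤ 2 * (γ - 1) * (∫ t in Ioo (0:ℝ) T, ∫ x, p x t * |G (p x t)|) :=
          mul_le_mul_of_nonneg_right (by linarith) hC'0
      _ ≤ 2 * (γ - 1) * (T * ((volume Ω).toReal * (p_M * M))) :=
          mul_le_mul_of_nonneg_left hC'le (by linarith)
  have h3 : (∫ x, p x 0) ≤ (γ - 1) * (∫ x, p x 0) :=
    le_mul_of_one_le_left hF0 (by linarith)
  have hfin : ((γ - 1)/2) * (∫ t in Ioo (0:ℝ) T, ∫ x, ‖gradient (fun y => p y t) x‖ ^ 2)
      ≤ ((γ - 1)/2) * (2 * (∫ x, p x 0)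
          + (∫ t in Ioo (0:ℝ) T, ∫ x in Ω, ‖gradient (fun y => Φ y t) x‖ ^ 2)
          + 4 * T * (volume Ω).toReal * p_M * M) := by
    have hring : ((γ - 1)/2) * (2 * (∫ x, p x 0)
          + (∫ t in Ioo (0:ℝ) T, ∫ x in Ω, ‖gradient (fun y => Φ y t) x‖ ^ 2)
          + 4 * T * (volume Ω).toReal * p_M * M)
        = (γ - 1) * (∫ x, p x 0)
          + ((γ - 1)/2) * (∫ t in Ioo (0:ℝ) T, ∫ x in Ω, ‖gradient (fun y => Φ y t) x‖ ^ 2)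
          + 2 * (γ - 1) * (T * ((volume Ω).toReal * (p_M * M))) := by ring
    rw [hring]
    linarith [part1, h2, h3]
  exact (mul_le_mul_iff_right₀ hγ1).mp hfin
end
end

section
/- Fix d ≥ 1, T > 0 and a bounded open set Ω ⊂ ℝ^d; write Ω_T = Ω × (0,T). For γ > 1, let n = n_γ : ℝ^d × [0,T] → [0, n_M] be a C¹ function supported in Ω for every t, and set p := n^γ. Assume the uniform bounds: ∫∫_{Ω_T} |∂_t n| dx dt ≤ C₀ and ∫∫_{Ω_T} n |∂_t p| dx dt ≤ C₀. Then ∫∫_{Ω_T} |∂_t p| dx dt ≤ γ 2^{1−γ} C₀ + 2 C₀; in particular there is a constant C, independent of γ > 1, such that ∫∫_{Ω_T} |∂_t p_γ| dx dt ≤ C. -/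
/-!
Write `∂ₜp = γ n^{γ-1} ∂ₜn`. Where `n ≤ 1/2` the factor `γ n^{γ-1}` is at most `γ 2^{1-γ}`, so
`|∂ₜp| ≤ γ 2^{1-γ} |∂ₜn|`; where `n > 1/2` we have `|∂ₜp| ≤ 2 n |∂ₜp|`. Hence pointwise
`|∂ₜp| ≤ γ 2^{1-γ} |∂ₜn| + 2 n |∂ₜp|`, and integrating over `Ω_T` gives the bound.
-/

open MeasureTheory Real Set Function

theorem rpow_sub_one_le_two_rpow_one_sub {a γ : ℝ} (ha : 0 ≤ a) (ha2 : a ≤ 1 / 2) (hγ : 1 ≤ γ) :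
    a ^ (γ - 1) ≤ (2 : ℝ) ^ (1 - γ) :=
  calc a ^ (γ - 1) ≤ (1 / 2 : ℝ) ^ (γ - 1) := rpow_le_rpow ha ha2 (by linarith)
    _ = (2 : ℝ) ^ (1 - γ) := by
      rw [one_div, inv_rpow zero_le_two, ← rpow_neg zero_le_two, neg_sub]

theorem abs_mul_mul_rpow_sub_one_le {a a' γ : ℝ} (ha : 0 ≤ a) (hγ : 1 ≤ γ) :
    |a' * γ * a ^ (γ - 1)| ≤ γ * 2 ^ (1 - γ) * |a'| + 2 * (a * |a' * γ * a ^ (γ - 1)|) := by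
  rcases le_or_gt a (1 / 2) with hsmall | hlarge
  · have hpow := rpow_sub_one_le_two_rpow_one_sub ha hsmall hγ
    have hsmall' : |a' * γ * a ^ (γ - 1)| ≤ γ * 2 ^ (1 - γ) * |a'| := by
      rw [abs_mul, abs_mul, abs_of_nonneg (by linarith : 0 ≤ γ), abs_of_nonneg (rpow_nonneg ha _)]
      calc |a'| * γ * a ^ (γ - 1) ≤ |a'| * γ * 2 ^ (1 - γ) := by gcongr
        _ = γ * 2 ^ (1 - γ) * |a'| := by ring
    have : 0 ≤ 2 * (a * |a' * γ * a ^ (γ - 1)|) := by positivity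
    linarith
  · have : 0 ≤ γ * 2 ^ (1 - γ) * |a'| := by positivity
    nlinarith [abs_nonneg (a' * γ * a ^ (γ - 1))]

theorem integral_integral_le_of_le {α β : Type*} [MeasurableSpace α] [MeasurableSpace β]
    {μ : Measure α} {ν : Measure β} [SFinite μ] [SFinite ν] {f g h : α → β → ℝ} (c e : ℝ)
    (hf : Integrable (uncurry f) (μ.prod ν)) (hg : Integrable (uncurry g) (μ.prod ν))
    (hh : Integrable (uncurry h) (μ.prod ν)) (hle : ∀ a b, f a b ≤ c * g a b + e * h a b) :
    ∫ a, ∫ b, f a b ∂ν ∂μ ≤ c * ∫ a, ∫ b, g a b ∂ν ∂μ + e * ∫ a, ∫ b, h a b ∂ν ∂μ :=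
  calc ∫ a, ∫ b, f a b ∂ν ∂μ = ∫ z, uncurry f z ∂μ.prod ν := (integral_prod _ hf).symm
    _ ≤ ∫ z, (c * uncurry g z + e * uncurry h z) ∂μ.prod ν :=
      integral_mono hf ((hg.const_mul c).add (hh.const_mul e)) fun z => hle z.1 z.2
    _ = c * ∫ z, uncurry g z ∂μ.prod ν + e * ∫ z, uncurry h z ∂μ.prod ν := by
      rw [integral_add (hg.const_mul c) (hh.const_mul e), integral_const_mul, integral_const_mul]
    _ = c * ∫ a, ∫ b, g a b ∂ν ∂μ + e * ∫ a, ∫ b, h a b ∂ν ∂μ := by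
      rw [integral_prod _ hg, integral_prod _ hh]
      rfl

theorem Continuous.integrable_prod_restrict_of_isBounded {α β : Type*}
    [MetricSpace α] [ProperSpace α] [MeasurableSpace α] [BorelSpace α]
    [MetricSpace β] [ProperSpace β] [MeasurableSpace β] [BorelSpace β]
    {μ : Measure α} {ν : Measure β} [IsFiniteMeasureOnCompacts μ] [IsFiniteMeasureOnCompacts ν]
    {f : α × β → ℝ} (hf : Continuous f) {s : Set α} {t : Set β}
    (hs : Bornology.IsBounded s) (ht : Bornology.IsBounded t) :
    Integrable f ((μ.restrict s).prod (ν.restrict t)) := by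
  rw [Measure.prod_restrict]
  exact (hf.continuousOn.integrableOn_compact (hs.isCompact_closure.prod ht.isCompact_closure)
    ).mono_set (prod_mono subset_closure subset_closure)

section PartialDerivative

variable {E G : Type*} [NormedAddCommGroup E] [NormedSpace ℝ E]
  [NormedAddCommGroup G] [NormedSpace ℝ G] {F : E × ℝ → G}

theorem DifferentiableAt.hasDerivAt_comp_prodMk_left {x : E} {t : ℝ}
    (hF : DifferentiableAt ℝ F (x, t)) :
    HasDerivAt (fun s => F (x, s)) (fderiv ℝ F (x, t) (0, 1)) t :=
  hF.hasFDerivAt.comp_hasDerivAt t ((hasDerivAt_const t x).prodMk (hasDerivAt_id t))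

theorem ContDiff.continuous_deriv_comp_prodMk_left (hF : ContDiff ℝ 1 F) :
    Continuous fun q : E × ℝ => deriv (fun s => F (q.1, s)) q.2 := by
  have hderiv : (fun q : E × ℝ => deriv (fun s => F (q.1, s)) q.2) =
      fun q => fderiv ℝ F q (0, 1) :=
    funext fun q => ((hF.differentiable one_ne_zero) q).hasDerivAt_comp_prodMk_left.deriv
  rw [hderiv]
  exact (hF.continuous_fderiv one_ne_zero).clm_apply continuous_const

end PartialDerivative

theorem stmt19_general (d : ℕ) (T : ℝ)
    (Ω : Set (EuclideanSpace ℝ (Fin d))) (hΩb : Bornology.IsBounded Ω)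
    (n_M C₀ : ℝ) (γ : ℝ) (hγ : 1 < γ)
    (n : EuclideanSpace ℝ (Fin d) → ℝ → ℝ)
    (hC1 : ContDiff ℝ 1 (fun q : (EuclideanSpace ℝ (Fin d)) × ℝ => n q.1 q.2))
    (hrange : ∀ x t, 0 ≤ n x t ∧ n x t ≤ n_M)
    (hdtn : (∫ t in Ioo (0:ℝ) T, ∫ x in Ω, |deriv (fun s => n x s) t|) ≤ C₀)
    (hndtp : (∫ t in Ioo (0:ℝ) T, ∫ x in Ω,
        n x t * |deriv (fun s => n x s ^ γ) t|) ≤ C₀) :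
    (∫ t in Ioo (0:ℝ) T, ∫ x in Ω, |deriv (fun s => n x s ^ γ) t|)
      ≤ γ * (2:ℝ) ^ (1 - γ) * C₀ + 2 * C₀ := by
  have hn : Continuous fun q : EuclideanSpace ℝ (Fin d) × ℝ => n q.1 q.2 := hC1.continuous
  have hdn := hC1.continuous_deriv_comp_prodMk_left
  have hdp : ∀ x t,
      deriv (fun s => n x s ^ γ) t = deriv (fun s => n x s) t * γ * n x t ^ (γ - 1) := fun x t =>
    deriv_rpow_const ((hC1.differentiable one_ne_zero _).hasDerivAt_comp_prodMk_left
      |>.differentiableAt) (Or.inr hγ.le)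
  have hdpc :
      Continuous fun q : EuclideanSpace ℝ (Fin d) × ℝ => deriv (fun s => n q.1 s ^ γ) q.2 := by
    simp_rw [hdp]
    exact (hdn.mul continuous_const).mul (hn.rpow_const fun _ => Or.inr (by linarith))
  have hint : ∀ g : EuclideanSpace ℝ (Fin d) × ℝ → ℝ, Continuous g →
      Integrable (fun z : ℝ × EuclideanSpace ℝ (Fin d) => g (z.2, z.1))
        ((volume.restrict (Ioo 0 T)).prod (volume.restrict Ω)) := fun g hg =>
    (hg.comp continuous_swap).integrable_prod_restrict_of_isBounded
      (Metric.isBounded_Ioo 0 T) hΩb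
  calc (∫ t in Ioo (0:ℝ) T, ∫ x in Ω, |deriv (fun s => n x s ^ γ) t|)
      ≤ γ * 2 ^ (1 - γ) * (∫ t in Ioo (0:ℝ) T, ∫ x in Ω, |deriv (fun s => n x s) t|)
        + 2 * ∫ t in Ioo (0:ℝ) T, ∫ x in Ω, n x t * |deriv (fun s => n x s ^ γ) t| :=
        integral_integral_le_of_le _ _ (hint _ hdpc.abs) (hint _ hdn.abs)
          (hint _ (hn.mul hdpc.abs)) fun t x => by
            rw [hdp]; exact abs_mul_mul_rpow_sub_one_le (hrange x t).1 hγ.le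
    _ ≤ γ * (2:ℝ) ^ (1 - γ) * C₀ + 2 * C₀ := by gcongr

/-- the uniform `L¹(Ω_T)` bound on `∂_t p_γ` for `p = n^γ`:
`∫∫ |∂_t p| ≤ γ 2^{1−γ} C₀ + 2 C₀`, whose right-hand side is bounded uniformly
in `γ > 1`. -/
theorem stmt19 (d : ℕ) (hd : 1 ≤ d) (T : ℝ) (hT : 0 < T)
    (Ω : Set (EuclideanSpace ℝ (Fin d))) (hΩo : IsOpen Ω) (hΩb : Bornology.IsBounded Ω)
    (n_M C₀ : ℝ) (γ : ℝ) (hγ : 1 < γ)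
    (n : EuclideanSpace ℝ (Fin d) → ℝ → ℝ)
    (hC1 : ContDiff ℝ 1 (fun q : (EuclideanSpace ℝ (Fin d)) × ℝ => n q.1 q.2))
    (hrange : ∀ x t, 0 ≤ n x t ∧ n x t ≤ n_M)
    (hsupp : ∀ t ∈ Icc (0:ℝ) T, (Function.support fun x => n x t) ⊆ Ω)
    (hdtn : (∫ t in Ioo (0:ℝ) T, ∫ x in Ω, |deriv (fun s => n x s) t|) ≤ C₀)
    (hndtp : (∫ t in Ioo (0:ℝ) T, ∫ x in Ω,
        n x t * |deriv (fun s => n x s ^ γ) t|) ≤ C₀) :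
    (∫ t in Ioo (0:ℝ) T, ∫ x in Ω, |deriv (fun s => n x s ^ γ) t|)
      ≤ γ * (2:ℝ) ^ (1 - γ) * C₀ + 2 * C₀ :=
  stmt19_general d T Ω hΩb n_M C₀ γ hγ n hC1 hrange hdtn hndtp
end
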